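/- Let B⊆V be linearly independent with Ω(b,b)=0 for all b∈B and Gr(B) connected. Let x∈V and let B_L⊆B be a subset with Gr(B_L) connected such that Γ_{B_L} does not fix x; set T(x)={b∈B_L : Ω(x,b)=1} (the set of b∈B_L with τ_b(x)≠x, which is nonempty). Let b∈B∖B_L and let (b₀,b₁,…,b_k=b) be a path in Gr(B) with b₀∈T(x) whose length k equals the distance in Gr(B) from b to the set T(x). Assume that Ω(b_{i−1},b_i)=1 for all i=1,…,k and that Ω(b_i,b_{i−1})=0 for at least one i∈{1,…,k}. Then the vector x+b lies in the Γ_B-orbit of x. -/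

import Mathlib

open scoped BigOperators

/-- A `ZMod 2`-valued bilinear form on `V`. -/
abbrev BForm (V : Type*) [AddCommGroup V] [Module (ZMod 2) V] :=
  V →ₗ[ZMod 2] V →ₗ[ZMod 2] ZMod 2

variable {V : Type*} [AddCommGroup V] [Module (ZMod 2) V]

/-- `g` is the transvection `τ_b : x ↦ x + Ω(x,b)·b` for some `b ∈ B`. -/
def IsTransvection (Ω : BForm V) (B : Set V) (g : V ≃ₗ[ZMod 2] V) : Prop :=
  ∃ b ∈ B, ∀ x : V, g x = x + Ω x b • b

/-- The group `Γ_B` generated by the transvections `τ_b`, `b ∈ B`. -/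
def Gamma (Ω : BForm V) (B : Set V) : Subgroup (V ≃ₗ[ZMod 2] V) :=
  Subgroup.closure {g | IsTransvection Ω B g}

/-- `x` and `y` lie in the same `Γ_B`-orbit. -/
def SameOrbit (Ω : BForm V) (B : Set V) (x y : V) : Prop :=
  ∃ g ∈ Gamma Ω B, g x = y

/-- The graph `Gr(X)` on vertex set `X`, with `b, b'` adjacent iff `Ω(b,b') = 1` or `Ω(b',b) = 1`. -/
def Gr (Ω : BForm V) (X : Set V) : SimpleGraph X :=
  SimpleGraph.fromRel fun a b => Ω a.1 b.1 = 1

/-- One basic move: `B' = φ_{c,a}(B)`, replacing `c` by `c + a`. -/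
def MoveRel (Ω : BForm V) (B B' : Set V) : Prop :=
  ∃ a c, a ∈ B ∧ c ∈ B ∧ a ≠ c ∧ Ω a c = 1 ∧ B' = insert (c + a) (B \ {c})

/-- `B` and `B'` are equivalent: related by a finite sequence of basic moves. -/
def EquivSets (Ω : BForm V) : Set V → Set V → Prop :=
  Relation.ReflTransGen (MoveRel Ω)

/-- The kernel `V₀` of the form `Ω`. -/
def V0set (Ω : BForm V) : Set V := {x | ∀ v : V, Ω x v = 0}

/-- `Δ`, the `Γ_B`-orbit containing `B` (when `Gr(B)` is connected). -/
def Delta (Ω : BForm V) (B : Set V) : Set V :=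
  {x | ∃ b ∈ B, SameOrbit Ω B b x}

/-- `V₀₀₀`: vectors of `V₀` of the form `x₁ + x₂` with `x₁, x₂ ∈ Δ`. -/
def V000set (Ω : BForm V) (B : Set V) : Set V :=
  {y | y ∈ V0set Ω ∧ ∃ x₁ ∈ Delta Ω B, ∃ x₂ ∈ Delta Ω B, y = x₁ + x₂}

/-- `U₀₀₀` for `U = span(B)`: vectors of `U₀` of the form `x₁ + x₂` with `x₁, x₂ ∈ Δ`. -/
def U000set (Ω : BForm V) (B : Set V) : Set V :=
  {y | y ∈ Submodule.span (ZMod 2) B ∧ (∀ u ∈ Submodule.span (ZMod 2) B, Ω y u = 0) ∧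
    ∃ x₁ ∈ Delta Ω B, ∃ x₂ ∈ Delta Ω B, y = x₁ + x₂}

/-- `x = x₁ + ⋯ + x_s` with all `x_i ∈ Δ` and `Ω(x_i, x_j) = 0`: a `Δ`-decomposition. -/
def HasDeltaDecomp (Ω : BForm V) (B : Set V) (x : V) (s : ℕ) : Prop :=
  1 ≤ s ∧ ∃ f : Fin s → V, (∀ i, f i ∈ Delta Ω B) ∧
    (∀ i j, i ≠ j → Ω (f i) (f j) = 0) ∧ x = ∑ i, f i

/-- `d(x)`: minimal length of a `Δ`-decomposition of `x`. -/
noncomputable def dval (Ω : BForm V) (B : Set V) (x : V) : ℕ :=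
  sInf {s | HasDeltaDecomp Ω B x s}

/-- `Q` is the quadratic form associated with `Ω` and `S` (`Q(b)=1` on `S`, polarization `Ω`). -/
def IsQuadForm (Ω : BForm V) (S : Set V) (Q : V → ZMod 2) : Prop :=
  (∀ b ∈ S, Q b = 1) ∧ ∀ u v : V, Q (u + v) = Q u + Q v + Ω u v

/-- The tree of type `D_{m,k}`: path `a₁ — ⋯ — a_m` with leaves `c₁, …, c_k` attached to `a_m`. -/
def DmkGraph (m k : ℕ) : SimpleGraph (Fin m ⊕ Fin k) :=
  SimpleGraph.fromRel fun x y =>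
    match x, y with
    | Sum.inl i, Sum.inl j => i.val + 1 = j.val
    | Sum.inl i, Sum.inr _ => i.val + 1 = m
    | _, _ => False

/-- The Dynkin tree `E₆`. -/
def E6Graph : SimpleGraph (Fin 6) :=
  SimpleGraph.fromRel fun i j => (i.val, j.val) ∈ [(0,1),(1,2),(2,3),(3,4),(2,5)]

/-- Two triangles sharing a common edge: four vertices, five edges. -/
def TwoTrianglesGraph : SimpleGraph (Fin 4) :=
  SimpleGraph.fromRel fun i j => (i.val, j.val) ∈ [(0,1),(0,2),(0,3),(1,2),(1,3)]

/-- The cycle of length `n`. -/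
def CycleGraph (n : ℕ) : SimpleGraph (Fin n) :=
  SimpleGraph.fromRel fun i j => j.val = (i.val + 1) % n

/-- Membership in the family `F`: type `D_{2,2}`, two triangles sharing an edge,
or a cycle of length at least `4`. -/
def InF {α : Type*} (G : SimpleGraph α) : Prop :=
  Nonempty (G ≃g DmkGraph 2 2) ∨ Nonempty (G ≃g TwoTrianglesGraph) ∨
    ∃ n, 4 ≤ n ∧ Nonempty (G ≃g CycleGraph n)

/-- `B` is equivalent to a set whose graph is a tree of type `D_{m,k}`. -/
def EquivToDmkTree (Ω : BForm V) (B : Set V) (m k : ℕ) : Prop :=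
  ∃ B' : Set V, EquivSets Ω B B' ∧ Nonempty (Gr Ω B' ≃g DmkGraph m k)

/-- `X` is equivalent to a set whose graph is `E₆`. -/
def EquivToE6 (Ω : BForm V) (X : Set V) : Prop :=
  ∃ X' : Set V, EquivSets Ω X X' ∧ Nonempty (Gr Ω X' ≃g E6Graph)

/-- Some subset of `B` is equivalent to a set whose graph is `E₆`. -/
def HasE6Subgraph (Ω : BForm V) (B : Set V) : Prop :=
  ∃ X ⊆ B, EquivToE6 Ω X

/-- `B` is a basis of `V` (as a set). -/
def IsBasisSet (B : Set V) : Prop :=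
  LinearIndependent (ZMod 2) (Subtype.val : B → V) ∧ Submodule.span (ZMod 2) B = ⊤

/-- `B` is equivalent to a set whose graph is a tree containing `E₆` as an induced subgraph. -/
def EquivToE6Tree (Ω : BForm V) (B : Set V) : Prop :=
  ∃ B' : Set V, EquivSets Ω B B' ∧ (Gr Ω B').IsTree ∧
    ∃ X ⊆ B', Nonempty (Gr Ω X ≃g E6Graph)

/-- `A` is a maximal complete subgraph (maximal clique) of `G`. -/
def IsMaxClique {α : Type*} (G : SimpleGraph α) (A : Set α) : Prop :=
  G.IsClique A ∧ ∀ A', G.IsClique A' → A ⊆ A' → A' = A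

lemma zmod2_em (z : ZMod 2) : z = 0 ∨ z = 1 := by revert z; decide

lemma vadd_self (v : V) : v + v = 0 := by
  have h2 : (2 : ZMod 2) = 0 := by decide
  rw [← two_smul (ZMod 2) v, h2, zero_smul]

def tauL (Ω : BForm V) (a : V) : V →ₗ[ZMod 2] V :=
  LinearMap.id + (Ω.flip a).smulRight a

lemma tauL_apply (Ω : BForm V) (a y : V) : tauL Ω a y = y + Ω y a • a := rfl

lemma omg_add (Ω : BForm V) (u v w : V) : Ω (u + v) w = Ω u w + Ω v w := by
  rw [map_add]; rfl

lemma tauL_tauL (Ω : BForm V) (a : V) (haa : Ω a a = 0) (y : V) :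
    tauL Ω a (tauL Ω a y) = y := by
  rw [tauL_apply, tauL_apply, omg_add]
  have h1 : Ω (Ω y a • a) a = 0 := by
    rw [map_smul]
    simp [haa]
  rw [h1, add_zero, add_assoc, vadd_self, add_zero]

def tauE (Ω : BForm V) (a : V) (haa : Ω a a = 0) : V ≃ₗ[ZMod 2] V :=
  LinearEquiv.ofLinear (tauL Ω a) (tauL Ω a)
    (by ext y; exact tauL_tauL Ω a haa y) (by ext y; exact tauL_tauL Ω a haa y)

lemma tauE_mem (Ω : BForm V) (B : Set V) {a : V} (haB : a ∈ B) (haa : Ω a a = 0) :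
    tauE Ω a haa ∈ Gamma Ω B :=
  Subgroup.subset_closure ⟨a, haB, fun _ => rfl⟩

lemma orbit_refl (Ω : BForm V) (B : Set V) (x : V) : SameOrbit Ω B x x := ⟨1, one_mem _, rfl⟩

lemma orbit_symm {Ω : BForm V} {B : Set V} {x y : V} (h : SameOrbit Ω B x y) :
    SameOrbit Ω B y x := by
  obtain ⟨g, hg, hxy⟩ := h
  exact ⟨g⁻¹, inv_mem hg, by rw [← hxy]; exact g.symm_apply_apply x⟩

lemma orbit_trans {Ω : BForm V} {B : Set V} {x y z : V} (h1 : SameOrbit Ω B x y)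
    (h2 : SameOrbit Ω B y z) : SameOrbit Ω B x z := by
  obtain ⟨g1, hg1, h1⟩ := h1
  obtain ⟨g2, hg2, h2⟩ := h2
  exact ⟨g2 * g1, mul_mem hg2 hg1, by rw [← h2, ← h1]; rfl⟩

lemma orbit_step (Ω : BForm V) (B : Set V) (hbb : ∀ b ∈ B, Ω b b = 0) {a : V}
    (haB : a ∈ B) {y : V} (h : Ω y a = 1) : SameOrbit Ω B y (y + a) := by
  refine ⟨tauE Ω a (hbb a haB), tauE_mem Ω B haB _, ?_⟩
  show tauL Ω a y = y + a
  rw [tauL_apply, h, one_smul]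

/-- Lemma C: path q 0, ..., q (m+1); all interior reverse-edges are 1, the last reverse
edge is 0, Ω x (q 0) = 1, Ω x (q (m+1)) = 0.  Then x ~ x + q (m+1). -/
lemma lemC (Ω : BForm V) (B : Set V) (hbb : ∀ b ∈ B, Ω b b = 0) :
    ∀ m : ℕ, ∀ q : ℕ → V, ∀ x : V,
    (∀ t, t ≤ m + 1 → q t ∈ B) →
    Ω x (q 0) = 1 →
    Ω x (q (m + 1)) = 0 →
    (∀ t, t ≤ m → Ω (q t) (q (t + 1)) = 1) →
    (∀ i j, i + 1 < j → j ≤ m + 1 → Ω (q i) (q j) = 0 ∧ Ω (q j) (q i) = 0) →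
    (∀ i, i + 1 ≤ m → Ω (q (i + 1)) (q i) = 1) →
    Ω (q (m + 1)) (q m) = 0 →
    SameOrbit Ω B x (x + q (m + 1)) := by
  intro m
  induction m using Nat.strong_induction_on with
  | _ m IH =>
  intro q x hqB h0 hlastx hfwd hchord hsym hlastf
  rcases Nat.eq_zero_or_pos m with hm | hm
  · subst hm
    -- base: three steps
    have s1 : SameOrbit Ω B x (x + q 0) := orbit_step Ω B hbb (hqB 0 (by omega)) h0
    have s2 : SameOrbit Ω B (x + q 0) (x + q 0 + q 1) := by
      refine orbit_step Ω B hbb (hqB 1 (by omega)) ?_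
      rw [omg_add, hlastx, hfwd 0 (by omega), zero_add]
    have s3 : SameOrbit Ω B (x + q 0 + q 1) (x + q 0 + q 1 + q 0) := by
      refine orbit_step Ω B hbb (hqB 0 (by omega)) ?_
      rw [omg_add, omg_add, h0, hbb (q 0) (hqB 0 (by omega)), hlastf]
      decide
    have e : x + q 0 + q 1 + q 0 = x + q 1 := by
      have : x + q 0 + q 1 + q 0 = x + q 1 + (q 0 + q 0) := by abel
      rw [this, vadd_self, add_zero]
    rw [e] at s3
    exact orbit_trans (orbit_trans s1 s2) s3
  · by_cases hin : ∃ j, 1 ≤ j ∧ j ≤ m ∧ Ω x (q j) = 1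
    · obtain ⟨j, hj1, hjm, hj⟩ := hin
      have hlt : m - j < m := by omega
      have harith : m - j + 1 + j = m + 1 := by omega
      have h := IH (m - j) hlt (fun t => q (t + j)) x
        (fun t ht => hqB (t + j) (by omega))
        (by simpa using hj)
        (by show Ω x (q (m - j + 1 + j)) = 0; rw [harith]; exact hlastx)
        (fun t ht => by
          have := hfwd (t + j) (by omega)
          simpa [Nat.add_right_comm] using this)
        (fun i j' hij hj' => by
          have := hchord (i + j) (j' + j) (by omega) (by omega)
          simpa using this)
        (fun i hi => by
          have := hsym (i + j) (by omega)
          simpa [Nat.add_right_comm] using this)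
        (by
          have h1 : m - j + 1 + j = m + 1 := harith
          have h2 : m - j + j = m := by omega
          simp only [h1, h2]
          exact hlastf)
      simpa only [harith] using h
    · push_neg at hin
      have heps : ∀ j, 1 ≤ j → j ≤ m → Ω x (q j) = 0 := by
        intro j h1 h2
        rcases zmod2_em (Ω x (q j)) with h | h
        · exact h
        · exact absurd h (hin j h1 h2)
      have s1 : SameOrbit Ω B x (x + q 0) := orbit_step Ω B hbb (hqB 0 (by omega)) h0
      have harith : m - 1 + 1 = m := by omega
      have h := IH (m - 1) (by omega) (fun t => q (t + 1)) (x + q 0)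
        (fun t ht => hqB (t + 1) (by omega))
        (by
          show Ω (x + q 0) (q 1) = 1
          rw [omg_add, heps 1 le_rfl hm, hfwd 0 (by omega)]
          decide)
        (by
          show Ω (x + q 0) (q (m - 1 + 1 + 1)) = 0
          have e : m - 1 + 1 + 1 = m + 1 := by omega
          rw [e, omg_add, hlastx, (hchord 0 (m + 1) (by omega) le_rfl).1, add_zero])
        (fun t ht => by
          have := hfwd (t + 1) (by omega)
          simpa using this)
        (fun i j' hij hj' => by
          have := hchord (i + 1) (j' + 1) (by omega) (by omega)
          simpa using this)
        (fun i hi => by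
          have := hsym (i + 1) (by omega)
          simpa using this)
        (by
          have e1 : m - 1 + 1 + 1 = m + 1 := by omega
          have e2 : m - 1 + 1 = m := harith
          simp only [e1, e2]
          exact hlastf)
      have e : m - 1 + 1 + 1 = m + 1 := by omega
      simp only [e] at h
      -- h : SameOrbit (x + q 0) (x + q 0 + q (m+1))
      have s3 : SameOrbit Ω B (x + q 0 + q (m + 1)) (x + q 0 + q (m + 1) + q 0) := by
        refine orbit_step Ω B hbb (hqB 0 (by omega)) ?_
        rw [omg_add, omg_add, h0, hbb (q 0) (hqB 0 (by omega)),
          (hchord 0 (m + 1) (by omega) le_rfl).2]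
        decide
      have e2 : x + q 0 + q (m + 1) + q 0 = x + q (m + 1) := by
        have : x + q 0 + q (m + 1) + q 0 = x + q (m + 1) + (q 0 + q 0) := by abel
        rw [this, vadd_self, add_zero]
      rw [e2] at s3
      exact orbit_trans (orbit_trans s1 h) s3

/-- Lemma B: shortest-path/token-sliding core. -/
lemma lemB (Ω : BForm V) (B : Set V) (hbb : ∀ b ∈ B, Ω b b = 0) :
    ∀ k : ℕ, ∀ p : ℕ → V, ∀ x : V,
    (∀ t, t ≤ k → p t ∈ B) →
    Ω x (p 0) = 1 →
    (∀ t, t < k → Ω (p t) (p (t + 1)) = 1) →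
    (∀ i j, i + 1 < j → j ≤ k → Ω (p i) (p j) = 0 ∧ Ω (p j) (p i) = 0) →
    (∃ w, 1 ≤ w ∧ w ≤ k ∧ Ω (p w) (p (w - 1)) = 0) →
    SameOrbit Ω B x (x + p k) := by
  intro k
  induction k using Nat.strong_induction_on with
  | _ k IH =>
  intro p x hpB h0 hfwd hchord hwit
  by_cases hk : Ω x (p k) = 1
  · exact orbit_step Ω B hbb (hpB k le_rfl) hk
  · have hk0 : Ω x (p k) = 0 := by
      rcases zmod2_em (Ω x (p k)) with h | h
      · exact h
      · exact absurd h hk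
    obtain ⟨w, hw1, hwk, hwf⟩ := hwit
    have hk1 : 1 ≤ k := le_trans hw1 hwk
    by_cases hin : ∃ i, 1 ≤ i ∧ i ≤ k - 1 ∧ Ω (p i) (p (i - 1)) = 0
    · -- sandwich trick; here k ≥ 2
      obtain ⟨i, hi1, hik, hif⟩ := hin
      have hk2 : 2 ≤ k := by omega
      have harith : k - 1 + 1 = k := by omega
      have d1 : SameOrbit Ω B x (x + p (k - 1)) :=
        IH (k - 1) (by omega) p x (fun t ht => hpB t (by omega)) h0
          (fun t ht => hfwd t (by omega))
          (fun i' j' h1 h2 => hchord i' j' h1 (by omega))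
          ⟨i, hi1, hik, hif⟩
      have d2 : SameOrbit Ω B (x + p (k - 1)) (x + p (k - 1) + p k) := by
        refine orbit_step Ω B hbb (hpB k le_rfl) ?_
        rw [omg_add, hk0, zero_add]
        have := hfwd (k - 1) (by omega)
        rwa [harith] at this
      have d3 : SameOrbit Ω B (x + p k) (x + p k + p (k - 1)) :=
        IH (k - 1) (by omega) p (x + p k) (fun t ht => hpB t (by omega))
          (by
            rw [omg_add, h0, (hchord 0 k (by omega) le_rfl).2, add_zero])
          (fun t ht => hfwd t (by omega))
          (fun i' j' h1 h2 => hchord i' j' h1 (by omega))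
          ⟨i, hi1, hik, hif⟩
      have e : x + p (k - 1) + p k = x + p k + p (k - 1) := by abel
      rw [e] at d2
      exact orbit_trans (orbit_trans d1 d2) (orbit_symm d3)
    · push_neg at hin
      have hsym : ∀ i, i + 1 ≤ k - 1 → Ω (p (i + 1)) (p i) = 1 := by
        intro i hi
        rcases zmod2_em (Ω (p (i + 1)) (p i)) with h | h
        · exact absurd (by simpa using h) (hin (i + 1) (by omega) (by omega))
        · exact h
      have hwk' : w = k := by
        by_contra hne
        exact (hin w hw1 (by omega)) hwf
      rw [hwk'] at hwf
      have harith : k - 1 + 1 = k := by omega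
      have h := lemC Ω B hbb (k - 1) p x
        (fun t ht => hpB t (by omega))
        h0
        (by rw [harith]; exact hk0)
        (fun t ht => hfwd t (by omega))
        (fun i' j' h1 h2 => hchord i' j' h1 (by omega))
        (fun i hi => hsym i (by omega))
        (by rw [harith]; simpa [harith] using hwf)
      rwa [harith] at h

set_option maxHeartbeats 2000000 in
theorem stmt19_aux {V : Type*} [AddCommGroup V] [Module (ZMod 2) V]
    (Ω : BForm V)
    (B : Set V)
    (hbb : ∀ b ∈ B, Ω b b = 0)
    (x : V) (BL : Set V)
    (b : V) (hb : b ∈ B)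
    (k : ℕ) (p : Fin (k + 1) → V) (hpinj : Function.Injective p)
    (hpB : ∀ i, p i ∈ B)
    (hp0 : p 0 ∈ BL ∧ Ω x (p 0) = 1)
    (hplast : p (Fin.last k) = b)
    (hforward : ∀ i : Fin k, Ω (p i.castSucc) (p i.succ) = 1)
    (hnonsym : ∃ i : Fin k, Ω (p i.succ) (p i.castSucc) = 0)
    (hshortest : ∀ (l : ℕ) (q : Fin (l + 1) → V), (∀ i, q i ∈ B) →
      (q 0 ∈ BL ∧ Ω x (q 0) = 1) → q (Fin.last l) = b →
      (∀ i : Fin l, q i.castSucc ≠ q i.succ ∧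
        (Ω (q i.castSucc) (q i.succ) = 1 ∨ Ω (q i.succ) (q i.castSucc) = 1)) →
      k ≤ l) :
    SameOrbit Ω B x (x + b) := by
  classical
  set P : ℕ → V := fun t => p ⟨min t k, Nat.lt_succ_of_le (Nat.min_le_right t k)⟩ with hP
  have hPdef : ∀ t, (ht : t ≤ k) → P t = p ⟨t, by omega⟩ := by
    intro t ht
    simp only [hP]
    congr 1
    exact Fin.ext (by simp [Nat.min_eq_left ht])
  have hzero : (⟨0, by omega⟩ : Fin (k+1)) = 0 := Fin.ext (by simp)
  have hlastk : (⟨k, by omega⟩ : Fin (k+1)) = Fin.last k := Fin.ext rfl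
  have hPB : ∀ t, t ≤ k → P t ∈ B := by
    intro t ht; rw [hPdef t ht]; exact hpB _
  have hP0 : P 0 = p 0 := by rw [hPdef 0 (by omega), hzero]
  have hPlast : P k = b := by rw [hPdef k le_rfl, hlastk, hplast]
  have hPfwd : ∀ t, t < k → Ω (P t) (P (t + 1)) = 1 := by
    intro t ht
    rw [hPdef t (by omega), hPdef (t + 1) (by omega)]
    exact hforward ⟨t, ht⟩
  have hwit : ∃ w, 1 ≤ w ∧ w ≤ k ∧ Ω (P w) (P (w - 1)) = 0 := by
    obtain ⟨i, hi⟩ := hnonsym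
    refine ⟨(i : ℕ) + 1, by omega, by omega, ?_⟩
    rw [show (i : ℕ) + 1 - 1 = (i : ℕ) from rfl,
      hPdef ((i : ℕ) + 1) (by omega), hPdef (i : ℕ) (by omega)]
    exact hi
  have hchord : ∀ i j, i + 1 < j → j ≤ k → Ω (P i) (P j) = 0 ∧ Ω (P j) (P i) = 0 := by
    intro i j hij hjk
    by_contra hcon
    have hedge : Ω (P i) (P j) = 1 ∨ Ω (P j) (P i) = 1 := by
      rcases zmod2_em (Ω (P i) (P j)) with h1 | h1
      · rcases zmod2_em (Ω (P j) (P i)) with h2 | h2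
        · exact absurd ⟨h1, h2⟩ hcon
        · exact Or.inr h2
      · exact Or.inl h1
    set d := j - i - 1 with hd
    set l := k - d with hl
    have hd1 : 1 ≤ d := by omega
    have hil : i < l := by omega
    have hld : l + d = k := by omega
    set q : Fin (l + 1) → V :=
      fun t => if (t : ℕ) ≤ i then P (t : ℕ) else P ((t : ℕ) + d) with hq
    have hlek := hshortest l q ?_ ?_ ?_ ?_
    · omega
    · intro t
      have := t.isLt
      by_cases h : (t : ℕ) ≤ i
      · simpa [hq, h] using hPB (t : ℕ) (by omega)
      · simpa [hq, h] using hPB ((t : ℕ) + d) (by omega)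
    · have e0 : q 0 = p 0 := by
        simp only [hq]
        rw [if_pos (by simp : ((0 : Fin (l + 1)) : ℕ) ≤ i)]
        simpa using hP0
      rw [e0]; exact hp0
    · have hni : ¬ ((Fin.last l : ℕ) ≤ i) := by rw [Fin.val_last]; omega
      simp only [hq]
      rw [if_neg hni, Fin.val_last, hld]
      exact hPlast
    · intro t
      have htl : (t : ℕ) < l := t.isLt
      by_cases h1 : (t : ℕ) + 1 ≤ i
      · have e1 : q t.castSucc = p ⟨(t : ℕ), by omega⟩ := by
          simp only [hq, Fin.coe_castSucc]
          rw [if_pos (by omega)]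
          exact hPdef _ (by omega)
        have e2 : q t.succ = p ⟨(t : ℕ) + 1, by omega⟩ := by
          simp only [hq, Fin.val_succ]
          rw [if_pos h1]
          exact hPdef _ (by omega)
        refine ⟨?_, Or.inl ?_⟩
        · rw [e1, e2]
          intro he
          have := hpinj he
          rw [Fin.ext_iff] at this
          simp at this
        · rw [e1, e2]
          exact hforward ⟨(t : ℕ), by omega⟩
      · by_cases h2 : (t : ℕ) ≤ i
        · -- t = i
          have hti : (t : ℕ) = i := by omega
          have e1 : q t.castSucc = P i := by
            simp only [hq, Fin.coe_castSucc]
            rw [if_pos h2, hti]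
          have e2 : q t.succ = P j := by
            simp only [hq, Fin.val_succ]
            rw [if_neg (by omega)]
            congr 1
            omega
          refine ⟨?_, ?_⟩
          · rw [e1, e2, hPdef i (by omega), hPdef j (by omega)]
            intro he
            have := hpinj he
            rw [Fin.ext_iff] at this
            simp at this
            omega
          · rw [e1, e2]
            exact hedge
        · have e1 : q t.castSucc = p ⟨(t : ℕ) + d, by omega⟩ := by
            simp only [hq, Fin.coe_castSucc]
            rw [if_neg h2]
            exact hPdef _ (by omega)
          have e2 : q t.succ = p ⟨(t : ℕ) + d + 1, by omega⟩ := by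
            simp only [hq, Fin.val_succ]
            rw [if_neg (by omega)]
            rw [show (t : ℕ) + 1 + d = (t : ℕ) + d + 1 by omega]
            exact hPdef _ (by omega)
          refine ⟨?_, Or.inl ?_⟩
          · rw [e1, e2]
            intro he
            have := hpinj he
            rw [Fin.ext_iff] at this
            simp at this
          · rw [e1, e2]
            exact hforward ⟨(t : ℕ) + d, by omega⟩
  have main := lemB Ω B hbb k P x hPB (by rw [hP0]; exact hp0.2) hPfwd hchord hwit
  rwa [hPlast] at main

/-- (Key lemma for non-symplectic transvections.) Let `Gr(B)` be connected,
`x ∈ V`, `B_L ⊆ B` connected with `Γ_{B_L}` not fixing `x`, `T(x) = {b ∈ B_L : Ω(x,b) = 1}`,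
and let `b ∈ B ∖ B_L`. If `(b₀, …, b_k = b)` is a shortest path in `Gr(B)` from `T(x)` to
`b` with `Ω(b_{i−1}, b_i) = 1` for all `i` and `Ω(b_i, b_{i−1}) = 0` for some `i`, then
`x + b` lies in the `Γ_B`-orbit of `x`. -/
theorem stmt_19 {V : Type*} [AddCommGroup V] [Module (ZMod 2) V]
    [FiniteDimensional (ZMod 2) V]
    (Ω : BForm V)
    (B : Set V) (hli : LinearIndependent (ZMod 2) (Subtype.val : B → V))
    (hbb : ∀ b ∈ B, Ω b b = 0) (hconn : (Gr Ω B).Connected)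
    (x : V) (BL : Set V) (hBL : BL ⊆ B) (hBLconn : (Gr Ω BL).Connected)
    (hnotfix : ∃ g ∈ Gamma Ω BL, g x ≠ x)
    (b : V) (hb : b ∈ B) (hbL : b ∉ BL)
    (k : ℕ) (p : Fin (k + 1) → V) (hpinj : Function.Injective p)
    (hpB : ∀ i, p i ∈ B)
    (hp0 : p 0 ∈ BL ∧ Ω x (p 0) = 1)
    (hplast : p (Fin.last k) = b)
    (hforward : ∀ i : Fin k, Ω (p i.castSucc) (p i.succ) = 1)
    (hnonsym : ∃ i : Fin k, Ω (p i.succ) (p i.castSucc) = 0)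
    (hshortest : ∀ (l : ℕ) (q : Fin (l + 1) → V), (∀ i, q i ∈ B) →
      (q 0 ∈ BL ∧ Ω x (q 0) = 1) → q (Fin.last l) = b →
      (∀ i : Fin l, q i.castSucc ≠ q i.succ ∧
        (Ω (q i.castSucc) (q i.succ) = 1 ∨ Ω (q i.succ) (q i.castSucc) = 1)) →
      k ≤ l) :
    SameOrbit Ω B x (x + b) := by
  exact stmt19_aux Ω B hbb x BL b hb k p hpinj hpB hp0 hplast hforward hnonsym hshortest
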